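/- arXiv:2309.11193 — 3 statements merged into one kernel-verified Lean document; each statement's English description precedes it below -/
import Mathlib

section
/- With the notation of the context, for any partition z0 < z1 < ⋯ < zK of an interval it holds that ∑_{k=1}^{K} σ*²(z_{k−1}, z_k)·(z_k − z_{k−1}) = ∑_{k=1}^{K} ℰ²(z_{k−1}, z_k)·(z_k − z_{k−1}) + ∫_{z0}^{zK} σ²(z) dz; in particular the two width-weighted sums differ by a constant that does not depend on the choice of partition of [z0, zK]. -/
open MeasureTheory ProbabilityTheory

/-- The expected local effect `μ(z) = ∫ g(z,ω) dκ z(ω)`. -/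
noncomputable def expEffect {Ω : Type*} [MeasurableSpace Ω] (κ : Kernel ℝ Ω)
    (g : ℝ → Ω → ℝ) (z : ℝ) : ℝ :=
  ∫ ω, g z ω ∂(κ z)

/-- The conditional variance `σ²(z) = ∫ (g(z,ω) − μ(z))² dκ z(ω)`. -/
noncomputable def condVar {Ω : Type*} [MeasurableSpace Ω] (κ : Kernel ℝ Ω)
    (g : ℝ → Ω → ℝ) (z : ℝ) : ℝ :=
  ∫ ω, (g z ω - expEffect κ g z) ^ 2 ∂(κ z)

/-- The bin effect `μ̄(z1,z2) = (z2−z1)⁻¹ ∫_{z1}^{z2} μ(z) dz`. -/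
noncomputable def binEffect {Ω : Type*} [MeasurableSpace Ω] (κ : Kernel ℝ Ω)
    (g : ℝ → Ω → ℝ) (z1 z2 : ℝ) : ℝ :=
  (z2 - z1)⁻¹ * ∫ z in z1..z2, expEffect κ g z

/-- The bin variance `σ²(z1,z2) = (z2−z1)⁻¹ ∫_{z1}^{z2} σ²(z) dz`. -/
noncomputable def binVar {Ω : Type*} [MeasurableSpace Ω] (κ : Kernel ℝ Ω)
    (g : ℝ → Ω → ℝ) (z1 z2 : ℝ) : ℝ :=
  (z2 - z1)⁻¹ * ∫ z in z1..z2, condVar κ g z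

/-- The bin error `ℰ²(z1,z2) = (z2−z1)⁻¹ ∫_{z1}^{z2} (μ(z) − μ̄(z1,z2))² dz`. -/
noncomputable def binError {Ω : Type*} [MeasurableSpace Ω] (κ : Kernel ℝ Ω)
    (g : ℝ → Ω → ℝ) (z1 z2 : ℝ) : ℝ :=
  (z2 - z1)⁻¹ * ∫ z in z1..z2, (expEffect κ g z - binEffect κ g z1 z2) ^ 2

/-- `σ*²(z1,z2) = (z2−z1)⁻¹ ∫_{z1}^{z2} ∫ (g(z,ω) − μ̄(z1,z2))² dκ z(ω) dz`. -/
noncomputable def sigmaStarSq {Ω : Type*} [MeasurableSpace Ω] (κ : Kernel ℝ Ω)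
    (g : ℝ → Ω → ℝ) (z1 z2 : ℝ) : ℝ :=
  (z2 - z1)⁻¹ * ∫ z in z1..z2, ∫ ω, (g z ω - binEffect κ g z1 z2) ^ 2 ∂(κ z)

section Aux

variable {Ω : Type*} [MeasurableSpace Ω] (κ : Kernel ℝ Ω) [IsMarkovKernel κ]
  (g : ℝ → Ω → ℝ)

lemma integral_sq_sub_const (hL2 : ∀ z : ℝ, MemLp (g z) 2 (κ z)) (z c : ℝ) :
    ∫ ω, (g z ω - c) ^ 2 ∂(κ z)
      = (∫ ω, (g z ω) ^ 2 ∂(κ z)) - 2 * c * (expEffect κ g z) + c ^ 2 := by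
  have hint : Integrable (g z) (κ z) := (hL2 z).integrable one_le_two
  have hsq : Integrable (fun ω => (g z ω) ^ 2) (κ z) := (hL2 z).integrable_sq
  have h : ∀ ω, (g z ω - c) ^ 2 = (g z ω) ^ 2 - (2 * c) * g z ω + c ^ 2 := by
    intro ω; ring
  simp_rw [h]
  have h1 : Integrable (fun ω => (g z ω) ^ 2 - (2 * c) * g z ω) (κ z) :=
    hsq.sub (hint.const_mul _)
  rw [integral_add h1 (integrable_const _),
      integral_sub hsq (hint.const_mul _), integral_const_mul, integral_const]
  simp [expEffect]

lemma condVar_eq (hL2 : ∀ z : ℝ, MemLp (g z) 2 (κ z)) (z : ℝ) :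
    condVar κ g z = (∫ ω, (g z ω) ^ 2 ∂(κ z)) - (expEffect κ g z) ^ 2 := by
  rw [_root_.condVar, integral_sq_sub_const κ g hL2]; ring

lemma condVar_nonneg (z : ℝ) : 0 ≤ condVar κ g z :=
  integral_nonneg fun ω => sq_nonneg _

lemma inner_decomp (hL2 : ∀ z : ℝ, MemLp (g z) 2 (κ z)) (z c : ℝ) :
    ∫ ω, (g z ω - c) ^ 2 ∂(κ z) = condVar κ g z + (expEffect κ g z - c) ^ 2 := by
  rw [integral_sq_sub_const κ g hL2, condVar_eq κ g hL2]; ring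

lemma expEffect_stronglyMeasurable (hg : Measurable (Function.uncurry g)) :
    StronglyMeasurable (expEffect κ g) :=
  hg.stronglyMeasurable.integral_kernel_prod_right

lemma sqEffect_stronglyMeasurable (hg : Measurable (Function.uncurry g)) :
    StronglyMeasurable fun t => ∫ ω, (g t ω) ^ 2 ∂(κ t) := by
  have : Measurable (Function.uncurry fun t ω => (g t ω) ^ 2) := hg.pow_const 2
  exact this.stronglyMeasurable.integral_kernel_prod_right

lemma sq_expEffect_le (hL2 : ∀ z : ℝ, MemLp (g z) 2 (κ z)) (z : ℝ) :
    (expEffect κ g z) ^ 2 ≤ ∫ ω, (g z ω) ^ 2 ∂(κ z) := by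
  have h := condVar_nonneg κ g z
  rw [condVar_eq κ g hL2] at h
  linarith

lemma sq_expEffect_integrableOn (hg : Measurable (Function.uncurry g))
    (hL2 : ∀ z : ℝ, MemLp (g z) 2 (κ z)) {a b : ℝ}
    (hsq : IntegrableOn (fun t => ∫ ω, (g t ω) ^ 2 ∂(κ t)) (Set.Icc a b)) :
    IntegrableOn (fun t => (expEffect κ g t) ^ 2) (Set.Icc a b) := by
  refine hsq.mono' (((expEffect_stronglyMeasurable κ g hg).pow 2).aestronglyMeasurable) ?_
  filter_upwards with t
  have h1 := sq_expEffect_le κ g hL2 t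
  have h2 : (0:ℝ) ≤ ∫ ω, (g t ω) ^ 2 ∂(κ t) := integral_nonneg fun ω => sq_nonneg _
  rw [Real.norm_eq_abs, abs_of_nonneg (sq_nonneg _)]
  exact h1

lemma condVar_integrableOn (hg : Measurable (Function.uncurry g))
    (hL2 : ∀ z : ℝ, MemLp (g z) 2 (κ z)) {a b : ℝ}
    (hsq : IntegrableOn (fun t => ∫ ω, (g t ω) ^ 2 ∂(κ t)) (Set.Icc a b)) :
    IntegrableOn (condVar κ g) (Set.Icc a b) := by
  have heq : condVar κ g
      = fun t => (∫ ω, (g t ω) ^ 2 ∂(κ t)) - (expEffect κ g t) ^ 2 :=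
    funext fun t => condVar_eq κ g hL2 t
  rw [heq]
  exact hsq.sub (sq_expEffect_integrableOn κ g hg hL2 hsq)

lemma bin_decomp (hg : Measurable (Function.uncurry g))
    (hL2 : ∀ z : ℝ, MemLp (g z) 2 (κ z)) {a b : ℝ} (hab : a < b)
    (hμ : IntegrableOn (fun t => ∫ ω, g t ω ∂(κ t)) (Set.Icc a b))
    (hsq : IntegrableOn (fun t => ∫ ω, (g t ω) ^ 2 ∂(κ t)) (Set.Icc a b)) :
    sigmaStarSq κ g a b * (b - a)
      = binError κ g a b * (b - a) + ∫ t in a..b, condVar κ g t := by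
  have hb : b - a ≠ 0 := sub_ne_zero.2 hab.ne'
  set c := binEffect κ g a b with hc
  have hIcc : Set.uIcc a b = Set.Icc a b := Set.uIcc_of_le hab.le
  have hcv : IntervalIntegrable (condVar κ g) volume a b := by
    rw [intervalIntegrable_iff_integrableOn_Icc_of_le hab.le]
    exact condVar_integrableOn κ g hg hL2 hsq
  have hres : IntervalIntegrable (fun t => (expEffect κ g t - c) ^ 2) volume a b := by
    rw [intervalIntegrable_iff_integrableOn_Icc_of_le hab.le]
    have hexp : (fun t => (expEffect κ g t - c) ^ 2)
        = fun t => (expEffect κ g t) ^ 2 - (2 * c) * (∫ ω, g t ω ∂(κ t)) + c ^ 2 := by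
      funext t; simp only [expEffect]; ring
    rw [hexp]
    exact ((sq_expEffect_integrableOn κ g hg hL2 hsq).sub
      (hμ.const_mul _)).add (integrableOn_const measure_Icc_lt_top.ne)
  have key : (∫ t in a..b, ∫ ω, (g t ω - c) ^ 2 ∂(κ t))
      = (∫ t in a..b, condVar κ g t) + ∫ t in a..b, (expEffect κ g t - c) ^ 2 := by
    rw [← intervalIntegral.integral_add hcv hres]
    apply intervalIntegral.integral_congr
    intro t _
    exact inner_decomp κ g hL2 t c
  have h1 : sigmaStarSq κ g a b * (b - a)
      = ∫ t in a..b, ∫ ω, (g t ω - c) ^ 2 ∂(κ t) := by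
    rw [sigmaStarSq]; field_simp; rfl
  have h2 : binError κ g a b * (b - a)
      = ∫ t in a..b, (expEffect κ g t - c) ^ 2 := by
    rw [binError]; field_simp; rfl
  rw [h1, h2, key]; ring

end Aux

/-- For any partition `z0 < z1 < ⋯ < zK`, the width-weighted sum of `σ*²` equals the
width-weighted sum of the bin errors plus the (partition-independent) integral
`∫_{z0}^{zK} σ²(z) dz`. -/
theorem sum_sigmaStarSq_eq_sum_binError_add_integral_condVar
    {Ω : Type*} [MeasurableSpace Ω] (κ : Kernel ℝ Ω) [IsMarkovKernel κ]
    (g : ℝ → Ω → ℝ) (hg : Measurable (Function.uncurry g))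
    (hL2 : ∀ z : ℝ, MemLp (g z) 2 (κ z))
    (K : ℕ) (hK : 0 < K) (z : ℕ → ℝ) (hz : ∀ k < K, z k < z (k + 1))
    (hμ : IntegrableOn (fun t => ∫ ω, g t ω ∂(κ t)) (Set.Icc (z 0) (z K)))
    (hsq : IntegrableOn (fun t => ∫ ω, (g t ω) ^ 2 ∂(κ t)) (Set.Icc (z 0) (z K))) :
    ∑ k ∈ Finset.range K, sigmaStarSq κ g (z k) (z (k + 1)) * (z (k + 1) - z k)
      = (∑ k ∈ Finset.range K, binError κ g (z k) (z (k + 1)) * (z (k + 1) - z k))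
        + ∫ t in (z 0)..(z K), condVar κ g t := by
  have hmono : ∀ j ≤ K, ∀ i ≤ j, z i ≤ z j := by
    intro j hj
    induction j with
    | zero => intro i hi; interval_cases i; rfl
    | succ n ih =>
      intro i hi
      rcases eq_or_lt_of_le hi with h | h
      · rw [h]
      · exact le_trans (ih (by omega) i (by omega)) (hz n (by omega)).le
  have hsub : ∀ k < K, Set.Icc (z k) (z (k + 1)) ⊆ Set.Icc (z 0) (z K) := by
    intro k hk
    exact Set.Icc_subset_Icc (hmono k (by omega) 0 (by omega))
      (hmono K le_rfl (k + 1) (by omega))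
  have hμk : ∀ k < K, IntegrableOn (fun t => ∫ ω, g t ω ∂(κ t))
      (Set.Icc (z k) (z (k + 1))) := fun k hk => hμ.mono_set (hsub k hk)
  have hsqk : ∀ k < K, IntegrableOn (fun t => ∫ ω, (g t ω) ^ 2 ∂(κ t))
      (Set.Icc (z k) (z (k + 1))) := fun k hk => hsq.mono_set (hsub k hk)
  have step : ∀ k ∈ Finset.range K,
      sigmaStarSq κ g (z k) (z (k + 1)) * (z (k + 1) - z k)
        = binError κ g (z k) (z (k + 1)) * (z (k + 1) - z k)
          + ∫ t in (z k)..(z (k + 1)), condVar κ g t := by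
    intro k hk
    have hk' := Finset.mem_range.mp hk
    exact bin_decomp κ g hg hL2 (hz k hk') (hμk k hk') (hsqk k hk')
  rw [Finset.sum_congr rfl step, Finset.sum_add_distrib]
  congr 1
  apply intervalIntegral.sum_integral_adjacent_intervals
  intro k hk
  rw [intervalIntegrable_iff_integrableOn_Icc_of_le (hz k hk).le]
  exact condVar_integrableOn κ g hg hL2 (hsqk k hk)
end

section
/- With the notation of the context, let m be the joint probability measure on ℝ × Ω obtained by drawing Z uniformly on [z1, z2] and then W from κ Z, and let (Z1,W1), …, (Zn,Wn) with n ≥ 2 be i.i.d. with law m. Then the Bessel-corrected sample variance σ̂² of the values g(Zi,Wi) satisfies E[σ̂²] = σ²(z1,z2) + ℰ²(z1,z2); consequently E[σ̂²] ≥ σ²(z1,z2), and σ̂² is an unbiased estimator of the true bin variance σ²(z1,z2) if and only if the bin error ℰ²(z1,z2) equals 0. -/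
open MeasureTheory ProbabilityTheory

/-- The uniform probability measure on the interval `[z1, z2]`. -/
noncomputable def uniformOnIcc (z1 z2 : ℝ) : Measure ℝ :=
  (ENNReal.ofReal (z2 - z1))⁻¹ • volume.restrict (Set.Icc z1 z2)

/-- The joint measure `m` on `ℝ × Ω` obtained by drawing `Z` uniformly on `[z1, z2]`
and then `W` from `κ Z` (composition-product of the uniform distribution with `κ`). -/
noncomputable def binMeasure {Ω : Type*} [MeasurableSpace Ω] (κ : Kernel ℝ Ω)
    (z1 z2 : ℝ) : Measure (ℝ × Ω) :=
  (uniformOnIcc z1 z2) ⊗ₘ κ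


/-- Expectation of the Bessel-corrected sample variance of i.i.d. samples equals the variance. -/
lemma sample_var_exp {E : Type*} [MeasurableSpace E] (m : Measure E) [IsProbabilityMeasure m]
    (f : E → ℝ) (hf : Measurable f) (hL2m : MemLp f 2 m)
    {α : Type*} [MeasurableSpace α] (P : Measure α) [IsProbabilityMeasure P]
    (n : ℕ) (hn : 2 ≤ n) (X : Fin n → α → E) (hXmeas : ∀ i, Measurable (X i))
    (hXiid : iIndepFun X P)
    (hXdist : ∀ i, Measure.map (X i) P = m) :
    ∫ a, ((n:ℝ)-1)⁻¹ * ∑ i : Fin n, (f (X i a) - (n:ℝ)⁻¹ * ∑ j : Fin n, f (X j a))^2 ∂P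
      = ∫ x, f x ^2 ∂m - (∫ x, f x ∂m)^2 := by
  have hn0 : (n:ℝ) ≠ 0 := by positivity
  have hn1 : (n:ℝ) - 1 ≠ 0 := by
    have : (2:ℝ) ≤ n := by exact_mod_cast hn
    nlinarith
  set Y : Fin n → α → ℝ := fun i a => f (X i a) with hY
  -- L² of each Y i
  have hYL2 : ∀ i, MemLp (Y i) 2 P := by
    intro i
    have : MemLp f 2 (Measure.map (X i) P) := by rw [hXdist i]; exact hL2m
    exact (memLp_map_measure_iff hf.aestronglyMeasurable (hXmeas i).aemeasurable).mp this
  have hYint : ∀ i, Integrable (Y i) P := fun i => (hYL2 i).integrable one_le_two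
  have hYsq : ∀ i, Integrable (fun a => Y i a ^ 2) P := fun i => (hYL2 i).integrable_sq
  have hYmul : ∀ i j, Integrable (fun a => Y i a * Y j a) P := by
    intro i j
    rcases eq_or_ne i j with rfl | hij
    · simpa [sq] using hYsq i
    · exact ((hXiid.indepFun hij).comp hf hf).integrable_mul (hYint i) (hYint j)
  -- moments
  have hEY : ∀ i, ∫ a, Y i a ∂P = ∫ x, f x ∂m := by
    intro i
    rw [← hXdist i, integral_map (hXmeas i).aemeasurable hf.aestronglyMeasurable]
  have hEYsq : ∀ i, ∫ a, Y i a ^ 2 ∂P = ∫ x, f x ^ 2 ∂m := by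
    intro i
    rw [← hXdist i, integral_map (hXmeas i).aemeasurable (hf.pow_const 2).aestronglyMeasurable]
  have hEmul : ∀ i j, i ≠ j → ∫ a, Y i a * Y j a ∂P = (∫ x, f x ∂m)^2 := by
    intro i j hij
    have := ((hXiid.indepFun hij).comp hf hf).integral_mul_eq_mul_integral (hYint i).1 (hYint j).1
    have e1 : (∫ a, Y i a * Y j a ∂P) = integral P (f ∘ X i * f ∘ X j) := rfl
    have e2 : integral P (f ∘ X i) = ∫ a, Y i a ∂P := rfl
    have e3 : integral P (f ∘ X j) = ∫ a, Y j a ∂P := rfl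
    rw [e1, this, e2, e3, hEY i, hEY j, sq]
  -- pointwise algebraic identity
  have key : ∀ a, ∑ i : Fin n, (Y i a - (n:ℝ)⁻¹ * ∑ j : Fin n, Y j a)^2
      = (∑ i : Fin n, Y i a ^ 2) - (n:ℝ)⁻¹ * ∑ i : Fin n, ∑ j : Fin n, Y i a * Y j a := by
    intro a
    set S := ∑ j : Fin n, Y j a with hS
    have h1 : ∑ i : Fin n, ∑ j : Fin n, Y i a * Y j a = S * S := by
      rw [← Finset.sum_mul_sum]
    rw [h1]
    have : ∀ i : Fin n, (Y i a - (n:ℝ)⁻¹ * S)^2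
        = Y i a ^ 2 - 2 * (n:ℝ)⁻¹ * S * Y i a + ((n:ℝ)⁻¹ * S)^2 := by intro i; ring
    rw [Finset.sum_congr rfl fun i _ => this i]
    rw [Finset.sum_add_distrib, Finset.sum_sub_distrib, ← Finset.mul_sum, ← hS,
      Finset.sum_const, Finset.card_univ, Fintype.card_fin, nsmul_eq_mul]
    field_simp
    ring
  -- rewrite the integrand
  have : ∫ a, ((n:ℝ)-1)⁻¹ * ∑ i : Fin n, (Y i a - (n:ℝ)⁻¹ * ∑ j : Fin n, Y j a)^2 ∂P
      = ((n:ℝ)-1)⁻¹ * ((∑ i : Fin n, ∫ a, Y i a ^ 2 ∂P)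
          - (n:ℝ)⁻¹ * ∑ i : Fin n, ∑ j : Fin n, ∫ a, Y i a * Y j a ∂P) := by
    simp_rw [key]
    rw [integral_const_mul]
    congr 1
    rw [integral_sub (integrable_finset_sum _ fun i _ => hYsq i)
      ((integrable_finset_sum _ fun i _ => integrable_finset_sum _ fun j _ => hYmul i j).const_mul _),
      integral_finset_sum _ fun i _ => hYsq i, integral_const_mul]
    congr 1
    congr 1
    rw [integral_finset_sum _ fun i _ => integrable_finset_sum _ fun j _ => hYmul i j]
    exact Finset.sum_congr rfl fun i _ => integral_finset_sum _ fun j _ => hYmul i j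
  rw [this]
  -- compute the double sum
  have hdiag : ∑ i : Fin n, ∑ j : Fin n, ∫ a, Y i a * Y j a ∂P
      = n * ∫ x, f x ^ 2 ∂m + (n^2 - n) * (∫ x, f x ∂m)^2 := by
    have : ∀ i : Fin n, ∑ j : Fin n, ∫ a, Y i a * Y j a ∂P
        = ∫ x, f x ^ 2 ∂m + ((n:ℝ) - 1) * (∫ x, f x ∂m)^2 := by
      intro i
      rw [← Finset.sum_erase_add _ _ (Finset.mem_univ i)]
      have h2 : ∫ a, Y i a * Y i a ∂P = ∫ x, f x ^ 2 ∂m := by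
        simp_rw [← sq]; exact hEYsq i
      rw [h2]
      have h3 : ∑ j ∈ Finset.univ.erase i, ∫ a, Y i a * Y j a ∂P
          = ((n:ℝ) - 1) * (∫ x, f x ∂m)^2 := by
        rw [Finset.sum_congr rfl (fun j hj => hEmul i j (Finset.ne_of_mem_erase hj).symm)]
        rw [Finset.sum_const, Finset.card_erase_of_mem (Finset.mem_univ i),
          Finset.card_univ, Fintype.card_fin, nsmul_eq_mul]
        push_cast [Nat.cast_sub (by omega : 1 ≤ n)]
        ring
      rw [h3]; ring
    rw [Finset.sum_congr rfl fun i _ => this i, Finset.sum_const, Finset.card_univ,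
      Fintype.card_fin, nsmul_eq_mul]
    ring
  rw [hdiag, Finset.sum_congr rfl fun i _ => hEYsq i, Finset.sum_const, Finset.card_univ,
    Fintype.card_fin, nsmul_eq_mul]
  field_simp
  ring

lemma uniformOnIcc_isProb {z1 z2 : ℝ} (h : z1 < z2) :
    IsProbabilityMeasure (uniformOnIcc z1 z2) := by
  constructor
  rw [uniformOnIcc, Measure.smul_apply, Measure.restrict_apply MeasurableSet.univ,
    Set.univ_inter, Real.volume_Icc, smul_eq_mul]
  exact ENNReal.inv_mul_cancel (by simp; linarith) (by simp)

lemma integral_uniformOnIcc {z1 z2 : ℝ} (h : z1 ≤ z2) (f : ℝ → ℝ) :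
    ∫ z, f z ∂(uniformOnIcc z1 z2) = (z2 - z1)⁻¹ * ∫ z in z1..z2, f z := by
  rw [uniformOnIcc, integral_smul_measure, intervalIntegral.integral_of_le h,
    ← integral_Icc_eq_integral_Ioc, ENNReal.toReal_inv,
    ENNReal.toReal_ofReal (by linarith : (0:ℝ) ≤ z2 - z1), smul_eq_mul]

lemma ae_uniformOnIcc_iff {z1 z2 : ℝ} (h : z1 < z2) {p : ℝ → Prop} :
    (∀ᵐ z ∂(uniformOnIcc z1 z2), p z) ↔ ∀ᵐ z ∂(volume.restrict (Set.Icc z1 z2)), p z := by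
  rw [uniformOnIcc, Measure.ae_ennreal_smul_measure_iff (by simp [ENNReal.inv_ne_zero])]

theorem totalVar {Ω : Type*} [MeasurableSpace Ω] (κ : Kernel ℝ Ω) [IsMarkovKernel κ]
    (g : ℝ → Ω → ℝ) (hg : Measurable (Function.uncurry g))
    (z1 z2 : ℝ) (h12 : z1 < z2)
    (hL2 : MemLp (fun p : ℝ × Ω => g p.1 p.2) 2 (binMeasure κ z1 z2))
    (hμ : IntegrableOn (fun z => ∫ ω, g z ω ∂(κ z)) (Set.Icc z1 z2))
    (hsq : IntegrableOn (fun z => ∫ ω, (g z ω) ^ 2 ∂(κ z)) (Set.Icc z1 z2)) :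
    (∫ p, g p.1 p.2 ^ 2 ∂(binMeasure κ z1 z2)) - (∫ p, g p.1 p.2 ∂(binMeasure κ z1 z2)) ^ 2
      = binVar κ g z1 z2 + binError κ g z1 z2 := by
  haveI : IsProbabilityMeasure (uniformOnIcc z1 z2) := uniformOnIcc_isProb h12
  haveI : IsProbabilityMeasure (binMeasure κ z1 z2) := by unfold binMeasure; infer_instance
  have hsub : z2 - z1 ≠ 0 := by linarith
  have hInt : Integrable (fun p : ℝ × Ω => g p.1 p.2) (binMeasure κ z1 z2) :=
    hL2.integrable one_le_two
  have hIntSq : Integrable (fun p : ℝ × Ω => g p.1 p.2 ^ 2) (binMeasure κ z1 z2) :=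
    hL2.integrable_sq
  -- first moment
  have hμ1 : ∫ p, g p.1 p.2 ∂(binMeasure κ z1 z2) = binEffect κ g z1 z2 := by
    rw [show binMeasure κ z1 z2 = (uniformOnIcc z1 z2) ⊗ₘ κ from rfl] at hInt ⊢
    rw [Measure.integral_compProd hInt, integral_uniformOnIcc h12.le, binEffect]
    rfl
  -- second moment
  have hM2 : ∫ p, g p.1 p.2 ^ 2 ∂(binMeasure κ z1 z2)
      = (z2 - z1)⁻¹ * ∫ z in z1..z2, ∫ ω, g z ω ^ 2 ∂(κ z) := by
    rw [show binMeasure κ z1 z2 = (uniformOnIcc z1 z2) ⊗ₘ κ from rfl] at hIntSq ⊢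
    rw [Measure.integral_compProd hIntSq, integral_uniformOnIcc h12.le]
  -- a.e. facts
  have hae_sq : ∀ᵐ z ∂(volume.restrict (Set.Ioc z1 z2)),
      Integrable (fun ω => g z ω ^ 2) (κ z) := by
    have h1 := ((Measure.integrable_compProd_iff hIntSq.aestronglyMeasurable).mp hIntSq).1
    have h2 := (ae_uniformOnIcc_iff h12).mp h1
    exact ae_mono (Measure.restrict_mono Set.Ioc_subset_Icc_self le_rfl) h2
  have haecond : ∀ᵐ z ∂(volume.restrict (Set.Ioc z1 z2)),
      condVar κ g z = (∫ ω, g z ω ^ 2 ∂(κ z)) - (expEffect κ g z) ^ 2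
      ∧ (expEffect κ g z) ^ 2 ≤ ∫ ω, g z ω ^ 2 ∂(κ z) := by
    filter_upwards [hae_sq] with z hz
    haveI : IsProbabilityMeasure (κ z) := IsMarkovKernel.isProbabilityMeasure z
    have hgz : Measurable (g z) := hg.of_uncurry_left
    have hL2z : MemLp (g z) 2 (κ z) :=
      (memLp_two_iff_integrable_sq hgz.aestronglyMeasurable).mpr hz
    have hint : Integrable (g z) (κ z) := hL2z.integrable one_le_two
    have hexp : condVar κ g z = (∫ ω, g z ω ^ 2 ∂(κ z)) - (expEffect κ g z) ^ 2 := by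
      rw [_root_.condVar]
      have e : ∀ ω, (g z ω - expEffect κ g z) ^ 2
          = g z ω ^ 2 - (2 * expEffect κ g z) * g z ω + (expEffect κ g z) ^ 2 :=
        fun ω => by ring
      simp_rw [e]
      have i2 : Integrable (fun ω => (2 * expEffect κ g z) * g z ω) (κ z) :=
        hint.const_mul _
      have i1 : Integrable (fun ω => g z ω ^ 2 - (2 * expEffect κ g z) * g z ω) (κ z) :=
        hz.sub i2
      rw [integral_add i1 (integrable_const _), integral_sub hz i2, integral_const_mul,
        integral_const, probReal_univ, one_smul]
      rw [show ∫ ω, g z ω ∂(κ z) = expEffect κ g z from rfl]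
      ring
    refine ⟨hexp, ?_⟩
    have h0 : 0 ≤ condVar κ g z := integral_nonneg fun ω => sq_nonneg _
    rw [hexp] at h0; linarith
  -- integrability on Ioc
  have hTIoc : IntegrableOn (fun z => ∫ ω, g z ω ^ 2 ∂(κ z)) (Set.Ioc z1 z2) :=
    hsq.mono_set Set.Ioc_subset_Icc_self
  have hμIoc : IntegrableOn (fun z => expEffect κ g z) (Set.Ioc z1 z2) :=
    hμ.mono_set Set.Ioc_subset_Icc_self
  have hμaesm : AEStronglyMeasurable (fun z => (expEffect κ g z) ^ 2)
      (volume.restrict (Set.Ioc z1 z2)) := by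
    simp_rw [pow_two]; exact hμIoc.1.mul hμIoc.1
  have hμ2Ioc : IntegrableOn (fun z => (expEffect κ g z) ^ 2) (Set.Ioc z1 z2) := by
    refine Integrable.mono' hTIoc hμaesm ?_
    filter_upwards [haecond] with z hz
    rw [Real.norm_eq_abs, abs_of_nonneg (sq_nonneg _)]
    exact hz.2
  have hcondIoc : IntegrableOn (fun z => condVar κ g z) (Set.Ioc z1 z2) :=
    (hTIoc.sub hμ2Ioc).congr (by filter_upwards [haecond] with z hz; exact hz.1.symm)
  -- interval integral identities
  have hIv : ∫ z in z1..z2, condVar κ g z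
      = (∫ z in z1..z2, ∫ ω, g z ω ^ 2 ∂(κ z)) - ∫ z in z1..z2, (expEffect κ g z) ^ 2 := by
    rw [intervalIntegral.integral_of_le h12.le, intervalIntegral.integral_of_le h12.le,
      intervalIntegral.integral_of_le h12.le, ← integral_sub hTIoc hμ2Ioc]
    exact integral_congr_ae (haecond.mono fun z hz => hz.1)
  have hIμ : ∫ z in z1..z2, expEffect κ g z = (z2 - z1) * binEffect κ g z1 z2 := by
    rw [binEffect]; field_simp
  have hiiμ : IntervalIntegrable (fun z => expEffect κ g z) volume z1 z2 :=
    (intervalIntegrable_iff_integrableOn_Ioc_of_le h12.le).mpr hμIoc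
  have hiiμ2 : IntervalIntegrable (fun z => (expEffect κ g z) ^ 2) volume z1 z2 :=
    (intervalIntegrable_iff_integrableOn_Ioc_of_le h12.le).mpr hμ2Ioc
  have hIerr : ∫ z in z1..z2, (expEffect κ g z - binEffect κ g z1 z2) ^ 2
      = (∫ z in z1..z2, (expEffect κ g z) ^ 2)
        - (z2 - z1) * (binEffect κ g z1 z2) ^ 2 := by
    have e : ∀ z, (expEffect κ g z - binEffect κ g z1 z2) ^ 2
        = (expEffect κ g z) ^ 2
          - (2 * binEffect κ g z1 z2) * expEffect κ g z + (binEffect κ g z1 z2) ^ 2 :=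
      fun z => by ring
    simp_rw [e]
    rw [intervalIntegral.integral_add (hiiμ2.sub ((hiiμ.const_mul _))) intervalIntegrable_const,
      intervalIntegral.integral_sub hiiμ2 (hiiμ.const_mul _),
      intervalIntegral.integral_const_mul, hIμ, intervalIntegral.integral_const, smul_eq_mul]
    ring
  rw [hμ1, hM2, binVar, binError, hIv, hIerr]
  field_simp
  try ring

/-- The expectation of the Bessel-corrected sample variance equals `σ²(z1,z2) + ℰ²(z1,z2)`;
hence it is at least the true bin variance, with unbiasedness iff the bin error vanishes. -/
theorem sample_variance_biased_for_binVar
    {Ω : Type*} [MeasurableSpace Ω] (κ : Kernel ℝ Ω) [IsMarkovKernel κ]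
    (g : ℝ → Ω → ℝ) (hg : Measurable (Function.uncurry g))
    (z1 z2 : ℝ) (h12 : z1 < z2)
    (hL2 : MemLp (fun p : ℝ × Ω => g p.1 p.2) 2 (binMeasure κ z1 z2))
    (hμ : IntegrableOn (fun z => ∫ ω, g z ω ∂(κ z)) (Set.Icc z1 z2))
    (hsq : IntegrableOn (fun z => ∫ ω, (g z ω) ^ 2 ∂(κ z)) (Set.Icc z1 z2))
    {α : Type*} [MeasurableSpace α] (P : Measure α) [IsProbabilityMeasure P]
    (n : ℕ) (hn : 2 ≤ n) (X : Fin n → α → ℝ × Ω)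
    (hXmeas : ∀ i, Measurable (X i))
    (hXiid : iIndepFun X P)
    (hXdist : ∀ i, Measure.map (X i) P = binMeasure κ z1 z2) :
    (∫ a, ((n : ℝ) - 1)⁻¹ *
        ∑ i : Fin n,
          (g (X i a).1 (X i a).2 - (n : ℝ)⁻¹ * ∑ j : Fin n, g (X j a).1 (X j a).2) ^ 2 ∂P
      = binVar κ g z1 z2 + binError κ g z1 z2) ∧
    binVar κ g z1 z2
      ≤ ∫ a, ((n : ℝ) - 1)⁻¹ *
          ∑ i : Fin n,
            (g (X i a).1 (X i a).2 - (n : ℝ)⁻¹ * ∑ j : Fin n, g (X j a).1 (X j a).2) ^ 2 ∂P ∧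
    ((∫ a, ((n : ℝ) - 1)⁻¹ *
        ∑ i : Fin n,
          (g (X i a).1 (X i a).2 - (n : ℝ)⁻¹ * ∑ j : Fin n, g (X j a).1 (X j a).2) ^ 2 ∂P
      = binVar κ g z1 z2) ↔ binError κ g z1 z2 = 0) := by
  haveI : IsProbabilityMeasure (uniformOnIcc z1 z2) := uniformOnIcc_isProb h12
  haveI : IsProbabilityMeasure (binMeasure κ z1 z2) := by unfold binMeasure; infer_instance
  have hA : (∫ a, ((n : ℝ) - 1)⁻¹ *
        ∑ i : Fin n,
          (g (X i a).1 (X i a).2 - (n : ℝ)⁻¹ * ∑ j : Fin n, g (X j a).1 (X j a).2) ^ 2 ∂P)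
      = (∫ p, g p.1 p.2 ^ 2 ∂(binMeasure κ z1 z2))
        - (∫ p, g p.1 p.2 ∂(binMeasure κ z1 z2)) ^ 2 :=
    sample_var_exp (binMeasure κ z1 z2) (fun p => g p.1 p.2) hg hL2 P n hn X hXmeas hXiid hXdist
  have hB := totalVar κ g hg z1 z2 h12 hL2 hμ hsq
  have h1 := hA.trans hB
  have hEnn : 0 ≤ binError κ g z1 z2 :=
    mul_nonneg (inv_nonneg.mpr (by linarith))
      (intervalIntegral.integral_nonneg h12.le fun z _ => sq_nonneg _)
  refine ⟨h1, by rw [h1]; linarith, ?_, ?_⟩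
  · intro h; rw [h1] at h; linarith
  · intro h; rw [h1, h, add_zero]
end

section
/- Let K ∈ ℕ and let B : ℕ → ℕ → ℝ≥0∞ be a cost function, where B l j is the cost of creating a bin with limits [x_l, x_j). Define T : ℕ → ℕ → ℝ≥0∞ recursively by T 0 j = 0 if j = 0 and T 0 j = ∞ otherwise, and T i j = min over l ∈ {0, …, K} of (T (i−1) l + B l j). Then for all i, j ≤ K, T i j equals the minimum over all finite sequences 0 = l_0, l_1, …, l_i = j with each l_k ∈ {0, …, K} of the total cost ∑_{k=1}^{i} B l_{k−1} l_k; in particular, T K K is the minimum total cost over all ways of partitioning the index range {0, …, K} into K (possibly degenerate) consecutive bins, which establishes the correctness of the dynamic-programming bin-splitting algorithm. -/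
open scoped ENNReal

/-- The dynamic-programming table: `T 0 j = 0` if `j = 0` and `∞` otherwise, and
`T (i+1) j = min over l ∈ {0, …, K} of (T i l + B l j)`, where `B l j` is the cost of
creating a bin with limits `[x_l, x_j)`. -/
noncomputable def dpT (K : ℕ) (B : ℕ → ℕ → ℝ≥0∞) : ℕ → ℕ → ℝ≥0∞
  | 0, j => if j = 0 then 0 else ⊤
  | i + 1, j => (Finset.range (K + 1)).inf (fun l => dpT K B i l + B l j)

/-- **Correctness of the DP bin-splitting algorithm**: for all `i, j ≤ K`, `T i j` equals
the minimum, over all sequences `0 = l_0, l_1, …, l_i = j` with every `l_k ∈ {0, …, K}`,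
of the total cost `∑_{k=1}^{i} B l_{k−1} l_k`; in particular `T K K` is the minimum total
cost over all ways of partitioning the index range `{0, …, K}` into `K` (possibly
degenerate) consecutive bins. -/
theorem dpT_correct (K : ℕ) (B : ℕ → ℕ → ℝ≥0∞) :
    (∀ i ≤ K, ∀ j ≤ K,
      dpT K B i j
        = ⨅ (l : ℕ → ℕ) (_ : l 0 = 0) (_ : l i = j) (_ : ∀ k ≤ i, l k ≤ K),
            ∑ k ∈ Finset.range i, B (l k) (l (k + 1))) ∧
    dpT K B K K
      = ⨅ (l : ℕ → ℕ) (_ : l 0 = 0) (_ : l K = K) (_ : ∀ k ≤ K, l k ≤ K),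
          ∑ k ∈ Finset.range K, B (l k) (l (k + 1)) := by
  have main : ∀ i ≤ K, ∀ j ≤ K,
      dpT K B i j
        = ⨅ (l : ℕ → ℕ) (_ : l 0 = 0) (_ : l i = j) (_ : ∀ k ≤ i, l k ≤ K),
            ∑ k ∈ Finset.range i, B (l k) (l (k + 1)) := by
    intro i
    induction i with
    | zero =>
      intro _ j hj
      simp only [dpT, Finset.range_zero, Finset.sum_empty]
      by_cases hj0 : j = 0
      · subst hj0
        rw [if_pos rfl]
        refine le_antisymm (le_iInf fun l => le_iInf fun _ => le_iInf fun _ =>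
          le_iInf fun _ => le_rfl) ?_
        refine iInf_le_of_le (fun _ => 0) ?_
        refine iInf_le_of_le rfl (iInf_le_of_le rfl (iInf_le_of_le ?_ le_rfl))
        intro k _; exact Nat.zero_le K
      · rw [if_neg hj0]
        refine le_antisymm ?_ le_top
        refine le_iInf fun l => le_iInf fun h0 => le_iInf fun hij => le_iInf fun _ => ?_
        exact absurd (hij.symm.trans h0) hj0
    | succ i IH =>
      intro hi1 j hj
      have hi' : i ≤ K := Nat.le_of_succ_le hi1
      simp only [dpT]
      rw [Finset.inf_eq_iInf]
      refine le_antisymm ?_ ?_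
      · refine le_iInf fun l => le_iInf fun h0 => le_iInf fun hij => le_iInf fun hK => ?_
        have hli : l i ≤ K := hK i (Nat.le_succ i)
        have hm : l i ∈ Finset.range (K + 1) := Finset.mem_range.mpr (Nat.lt_succ_of_le hli)
        refine le_trans (iInf₂_le (l i) hm) ?_
        have h1 : dpT K B i (l i) ≤ ∑ k ∈ Finset.range i, B (l k) (l (k + 1)) := by
          rw [IH hi' (l i) hli]
          exact iInf_le_of_le l (iInf_le_of_le h0 (iInf_le_of_le rfl
            (iInf_le _ (fun k hk => hK k (hk.trans (Nat.le_succ i))))))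
        calc dpT K B i (l i) + B (l i) j
            ≤ (∑ k ∈ Finset.range i, B (l k) (l (k + 1))) + B (l i) j :=
              add_le_add h1 le_rfl
          _ = ∑ k ∈ Finset.range (i + 1), B (l k) (l (k + 1)) := by
              rw [Finset.sum_range_succ, hij]
      · refine le_iInf fun m => le_iInf fun hm => ?_
        have hmK : m ≤ K := Nat.lt_succ_iff.mp (Finset.mem_range.mp hm)
        rw [IH hi' m hmK]
        simp only [ENNReal.iInf_add]
        refine le_iInf fun l => le_iInf fun h0 => le_iInf fun him => le_iInf fun hK => ?_
        set l' : ℕ → ℕ := fun k => if k ≤ i then l k else j with hl'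
        have hl'0 : l' 0 = 0 := by simp [hl', Nat.zero_le, h0]
        have hl'i1 : l' (i + 1) = j := by simp [hl', Nat.not_succ_le_self]
        have hl'i : l' i = m := by simp [hl', him]
        have hl'K : ∀ k ≤ i + 1, l' k ≤ K := by
          intro k hk
          by_cases h : k ≤ i
          · simpa [hl', h] using hK k h
          · simpa [hl', h] using hj
        refine iInf_le_of_le l' (iInf_le_of_le hl'0 (iInf_le_of_le hl'i1
          (iInf_le_of_le hl'K ?_)))
        have hsum : ∑ k ∈ Finset.range (i + 1), B (l' k) (l' (k + 1))
            = (∑ k ∈ Finset.range i, B (l k) (l (k + 1))) + B m j := by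
          rw [Finset.sum_range_succ, hl'i, hl'i1]
          congr 1
          refine Finset.sum_congr rfl fun k hk => ?_
          have hk' : k < i := Finset.mem_range.mp hk
          have e1 : l' k = l k := by simp [hl', hk'.le]
          have e2 : l' (k + 1) = l (k + 1) := by simp [hl', Nat.succ_le_of_lt hk']
          rw [e1, e2]
        rw [hsum]
  exact ⟨main, main K le_rfl K le_rfl⟩
end
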